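/- arXiv:1401.7295 — 4 statements merged into one kernel-verified Lean document; each statement's English description precedes it below -/
import Mathlib

section
/- Let Y be an n-dimensional compact connected C⁰-submanifold with nonempty boundary of a smooth connected Riemannian n-manifold X without boundary, and suppose that the relative boundary distance function ρ_Y is finite everywhere and is a metric on Y. Then any two points x,y ∈ Y can be joined by a shortest curve in the metric ρ_Y: there exists γ : [0,L] → Y with L = ρ_Y(x,y), γ(0)=x, γ(L)=y, and ρ_Y(γ(s),γ(t)) = t − s for all 0 ≤ s < t ≤ L. -/
/-!
`ρ_Y` is a `liminf` over neighbourhoods, hence lower semicontinuous, and it dominates the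
distance of `X`. Cutting a nearly shortest path in `Int Y` at half its length and passing to a
limit in the compact set `Y` shows that any two points of `Y` have a `ρ_Y`-midpoint. Iterated
midpoints give dyadic points along which `ρ_Y` grows at most linearly; they converge to a curve
`γ` with `ρ_Y(γ s, γ t) ≤ (t - s) ρ_Y(x, y)` by lower semicontinuity, and the triangle
inequality through `γ s` and `γ t` turns these bounds into equalities.
-/

open Set Filter Topology Manifold ENNReal EuclideanGeometry

noncomputable section

/-- The infimum of lengths of continuous paths joining `a` and `b` inside `S`
(standing in for the infimum of lengths of smooth paths). -/
def infPathLength {X : Type*} [PseudoEMetricSpace X] (S : Set X) (a b : X) : ℝ≥0∞ :=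
  ⨅ γ ∈ {γ : ℝ → X | ContinuousOn γ (Set.Icc 0 1) ∧
      (∀ t ∈ Set.Icc (0:ℝ) 1, γ t ∈ S) ∧ γ 0 = a ∧ γ 1 = b},
    eVariationOn γ (Set.Icc 0 1)

/-- `liminf` of the infimal path lengths through `S` as the endpoints tend to `x`, `y`
within `S`. -/
def relMetricVia {X : Type*} [PseudoEMetricSpace X] (S : Set X) (x y : X) : ℝ≥0∞ :=
  Filter.liminf (fun p : X × X => infPathLength S p.1 p.2) ((𝓝[S] x) ×ˢ (𝓝[S] y))

/-- The relative metric `ρ_Y` of a submanifold `Y`: the `liminf`, as `x' → x` and `y' → y`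
with `x', y' ∈ Int Y`, of the infimal length of paths joining `x'` and `y'` in `Int Y`. -/
def relMetric {X : Type*} [PseudoEMetricSpace X] (Y : Set X) (x y : X) : ℝ≥0∞ :=
  relMetricVia (interior Y) x y

/-- `ρ` is a metric on the set `Y`. -/
def IsMetricOn {X : Type*} (ρ : X → X → ℝ≥0∞) (Y : Set X) : Prop :=
  (∀ x ∈ Y, ρ x x = 0) ∧
  (∀ x ∈ Y, ∀ y ∈ Y, ρ x y = 0 → x = y) ∧
  (∀ x ∈ Y, ∀ y ∈ Y, ρ x y = ρ y x) ∧
  (∀ x ∈ Y, ∀ y ∈ Y, ∀ z ∈ Y, ρ x z ≤ ρ x y + ρ y z)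

/-- `γ : [0,1] → Y` is a shortest path from `a` to `b` in the (generalized) metric `ρ`:
a path in `Y` along which `ρ` is additive (equivalently, whose `ρ`-length is `ρ a b`). -/
def IsShortestPath {X : Type*} [PseudoEMetricSpace X] (ρ : X → X → ℝ≥0∞) (Y : Set X)
    (γ : ℝ → X) (a b : X) : Prop :=
  ContinuousOn γ (Set.Icc 0 1) ∧ (∀ t ∈ Set.Icc (0:ℝ) 1, γ t ∈ Y) ∧ γ 0 = a ∧ γ 1 = b ∧
  ∀ s t u : ℝ, 0 ≤ s → s ≤ t → t ≤ u → u ≤ 1 →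
    ρ (γ s) (γ u) = ρ (γ s) (γ t) + ρ (γ t) (γ u)

/-- `Y` is strictly convex in its relative metric `ρ_Y`. -/
def StrictlyConvexIn {X : Type*} [PseudoEMetricSpace X] (Y : Set X) : Prop :=
  ∀ a ∈ Y, ∀ b ∈ Y, ∀ γ : ℝ → X, IsShortestPath (relMetric Y) Y γ a b →
    ∀ t ∈ Set.Ioo (0:ℝ) 1, γ t ∈ interior Y

/-- Property (○): shortest paths between boundary points have their open interior in `Int Y`. -/
def PropertyCirc {X : Type*} [PseudoEMetricSpace X] (Y : Set X) : Prop :=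
  ∀ a ∈ frontier Y, ∀ b ∈ frontier Y, ∀ γ : ℝ → X, IsShortestPath (relMetric Y) Y γ a b →
    ∀ t ∈ Set.Ioo (0:ℝ) 1, γ t ∈ interior Y

/-- The sets `B₁`, `B₂` are isometric w.r.t. the generalized metrics `ρ₁`, `ρ₂`. -/
def BoundaryIsometric {X : Type*} (ρ₁ ρ₂ : X → X → ℝ≥0∞) (B₁ B₂ : Set X) : Prop :=
  ∃ f : B₁ → B₂, Function.Bijective f ∧ ∀ a b : B₁, ρ₂ (f a) (f b) = ρ₁ a b

theorem lowerSemicontinuous_liminf_nhdsWithin {α β : Type*} [TopologicalSpace α]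
    [CompleteLinearOrder β] (f : α → β) (T : Set α) :
    LowerSemicontinuous fun p => liminf f (𝓝[T] p) := by
  intro p c (hc : c < liminf f (𝓝[T] p))
  rw [liminf_eq, lt_sSup_iff] at hc
  obtain ⟨a, ha, hca⟩ := hc
  have ha' : ∀ᶠ x in 𝓝 p, x ∈ T → a ≤ f x := eventually_nhdsWithin_iff.1 ha
  filter_upwards [ha'.eventually_nhds] with q hq
  exact hca.trans_le (le_liminf_of_le (by isBoundedDefault) (eventually_nhdsWithin_iff.2 hq))

section PathMetric

variable {X : Type*} [PseudoEMetricSpace X] {S : Set X}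

theorem infPathLength_anti {T : Set X} (hST : S ⊆ T) (a b : X) :
    infPathLength T a b ≤ infPathLength S a b :=
  iInf₂_mono' fun γ ⟨hγ, hγS, hγ0, hγ1⟩ => ⟨γ, ⟨hγ, fun t ht => hST (hγS t ht), hγ0, hγ1⟩, le_rfl⟩

theorem infPathLength_le_eVariationOn {σ : ℝ → X} (hσ : ContinuousOn σ (Icc 0 1))
    (hσS : ∀ t ∈ Icc (0:ℝ) 1, σ t ∈ S) {r t : ℝ} (hr : 0 ≤ r) (hrt : r ≤ t) (ht : t ≤ 1) :
    infPathLength S (σ r) (σ t) ≤ eVariationOn σ (Icc r t) := by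
  set φ : ℝ → ℝ := fun u => r + u * (t - r)
  have hφ : MapsTo φ (Icc 0 1) (Icc r t) := fun u ⟨h0, h1⟩ =>
    ⟨by nlinarith, by nlinarith⟩
  have hφ_mono : MonotoneOn φ (Icc 0 1) := fun u _ w _ huw => by
    dsimp only [φ]; nlinarith
  have hsub : Icc r t ⊆ Icc 0 1 := Icc_subset_Icc hr ht
  calc infPathLength S (σ r) (σ t) ≤ eVariationOn (σ ∘ φ) (Icc 0 1) := by
        refine iInf₂_le (σ ∘ φ) ⟨hσ.comp (by fun_prop) (hφ.mono_right hsub),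
          fun u hu => hσS _ (hsub (hφ hu)), by simp [φ], by simp [φ]⟩
    _ = eVariationOn σ (φ '' Icc 0 1) := eVariationOn.comp_eq_of_monotoneOn σ φ hφ_mono
    _ ≤ eVariationOn σ (Icc r t) := eVariationOn.mono σ hφ.image_subset

theorem relMetricVia_le_infPathLength {a b : X} (ha : a ∈ S) (hb : b ∈ S) :
    relMetricVia S a b ≤ infPathLength S a b := by
  have hab : pure (a, b) ≤ (𝓝[S] a) ×ˢ (𝓝[S] b) := by
    rw [← prod_pure_pure]
    exact prod_mono (pure_le_nhdsWithin ha) (pure_le_nhdsWithin hb)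
  refine liminf_le_of_frequently_le' (Frequently.filter_mono ?_ hab)
  exact (eventually_pure.2 le_rfl).frequently

theorem relMetricVia_le_eVariationOn {σ : ℝ → X} (hσ : ContinuousOn σ (Icc 0 1))
    (hσS : ∀ t ∈ Icc (0:ℝ) 1, σ t ∈ S) {r t : ℝ} (hr : 0 ≤ r) (hrt : r ≤ t) (ht : t ≤ 1) :
    relMetricVia S (σ r) (σ t) ≤ eVariationOn σ (Icc r t) :=
  (relMetricVia_le_infPathLength (hσS r ⟨hr, hrt.trans ht⟩) (hσS t ⟨hr.trans hrt, ht⟩)).trans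
    (infPathLength_le_eVariationOn hσ hσS hr hrt ht)

theorem lowerSemicontinuous_relMetricVia (S : Set X) :
    LowerSemicontinuous (Function.uncurry (relMetricVia S)) := by
  convert lowerSemicontinuous_liminf_nhdsWithin
    (fun p : X × X => infPathLength S p.1 p.2) (S ×ˢ S) using 2 with p
  rw [← p.eta, nhdsWithin_prod_eq]
  rfl

theorem edist_le_relMetricVia (hS : ∀ a b, edist a b ≤ infPathLength S a b) (x y : X) :
    edist x y ≤ relMetricVia S x y := by
  rcases eq_or_neBot ((𝓝[S] x) ×ˢ (𝓝[S] y)) with hbot | hne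
  · simp [relMetricVia, hbot]
  have h : Tendsto (fun p : X × X => edist p.1 p.2) ((𝓝[S] x) ×ˢ (𝓝[S] y)) (𝓝 (edist x y)) :=
    (continuous_edist.tendsto (x, y)).mono_left
      (nhds_prod_eq (x := x) (y := y) ▸ prod_mono nhdsWithin_le_nhds nhdsWithin_le_nhds)
  rw [← h.liminf_eq]
  exact liminf_le_liminf (Eventually.of_forall fun p => hS p.1 p.2)

theorem exists_path_of_relMetricVia_lt {a b : X} {c : ℝ≥0∞} (h : relMetricVia S a b < c)
    {U V : Set X} (hU : U ∈ 𝓝 a) (hV : V ∈ 𝓝 b) :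
    ∃ σ : ℝ → X, ContinuousOn σ (Icc 0 1) ∧ (∀ t ∈ Icc (0:ℝ) 1, σ t ∈ S) ∧
      σ 0 ∈ U ∧ σ 1 ∈ V ∧ eVariationOn σ (Icc 0 1) < c := by
  obtain ⟨⟨a', b'⟩, hp, ⟨hpU, -⟩, hpV, -⟩ :=
    ((frequently_lt_of_liminf_lt (by isBoundedDefault) h).and_eventually
      (prod_mem_prod (inter_mem (mem_nhdsWithin_of_mem_nhds hU) self_mem_nhdsWithin)
        (inter_mem (mem_nhdsWithin_of_mem_nhds hV) self_mem_nhdsWithin))).exists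
  obtain ⟨σ, ⟨hσ, hσS, rfl, rfl⟩, hσc⟩ := by simpa only [infPathLength, iInf_lt_iff] using hp
  exact ⟨σ, hσ, hσS, hpU, hpV, hσc⟩

end PathMetric

section Midpoints

variable {X : Type*} [PseudoEMetricSpace X]

theorem exists_halfway_of_le_eVariationOn {ρ : X → X → ℝ≥0∞}
    (hρ : LowerSemicontinuous (Function.uncurry ρ)) {σ : ℝ → X} (hσ : ContinuousOn σ (Icc 0 1))
    (hle : ∀ r t, 0 ≤ r → r ≤ t → t ≤ 1 → ρ (σ r) (σ t) ≤ eVariationOn σ (Icc r t)) :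
    ∃ t ∈ Icc (0:ℝ) 1, ρ (σ 0) (σ t) ≤ eVariationOn σ (Icc 0 1) / 2 ∧
      ρ (σ t) (σ 1) ≤ eVariationOn σ (Icc 0 1) / 2 := by
  set ℓ := eVariationOn σ (Icc 0 1)
  set A := Icc 0 1 ∩ (fun t => (σ 0, σ t)) ⁻¹' {p | Function.uncurry ρ p ≤ ℓ / 2}
  set B := Icc 0 1 ∩ (fun t => (σ t, σ 1)) ⁻¹' {p | Function.uncurry ρ p ≤ ℓ / 2}
  have hA : IsClosed A := (continuousOn_const.prodMk hσ).preimage_isClosed_of_isClosed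
    isClosed_Icc (hρ.isClosed_preimage (ℓ / 2))
  have hB : IsClosed B := (hσ.prodMk continuousOn_const).preimage_isClosed_of_isClosed
    isClosed_Icc (hρ.isClosed_preimage (ℓ / 2))
  have h0A : (0:ℝ) ∈ Icc (0:ℝ) 1 ∩ A := ⟨⟨le_rfl, zero_le_one⟩, ⟨le_rfl, zero_le_one⟩,
    (hle 0 0 le_rfl le_rfl zero_le_one).trans (by simp)⟩
  have h1B : (1:ℝ) ∈ Icc (0:ℝ) 1 ∩ B := ⟨⟨zero_le_one, le_rfl⟩, ⟨zero_le_one, le_rfl⟩,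
    (hle 1 1 zero_le_one le_rfl le_rfl).trans (by simp)⟩
  -- the variations on `[0, t]` and `[t, 1]` add up to `ℓ`, so one of them is at most `ℓ / 2`
  have hcover : Icc (0:ℝ) 1 ⊆ A ∪ B := by
    intro t ht
    have hsum : eVariationOn σ (Icc 0 t) + eVariationOn σ (Icc t 1) = ℓ := by
      simpa using eVariationOn.Icc_add_Icc σ (s := univ) ht.1 ht.2 (mem_univ t)
    by_contra h
    rw [mem_union, not_or] at h
    have h0 : ℓ / 2 < eVariationOn σ (Icc 0 t) :=
      lt_of_not_ge fun h' => h.1 ⟨ht, (hle 0 t le_rfl ht.1 ht.2).trans h'⟩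
    have h1 : ℓ / 2 < eVariationOn σ (Icc t 1) :=
      lt_of_not_ge fun h' => h.2 ⟨ht, (hle t 1 ht.1 ht.2 le_rfl).trans h'⟩
    have := ENNReal.add_lt_add h0 h1
    rw [ENNReal.add_halves, hsum] at this
    exact lt_irrefl ℓ this
  obtain ⟨t, ht, ⟨-, htA⟩, ⟨-, htB⟩⟩ :=
    isPreconnected_closed_iff.1 isPreconnected_Icc A B hA hB hcover ⟨0, h0A⟩ ⟨1, h1B⟩
  exact ⟨t, ht, htA, htB⟩

theorem exists_midpoint_relMetricVia {S Y : Set X} (hSY : S ⊆ Y) (hY : IsCompact Y) {a b : X}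
    (hab : relMetricVia S a b ≠ ⊤) :
    ∃ m ∈ Y, relMetricVia S a m ≤ relMetricVia S a b / 2 ∧
      relMetricVia S m b ≤ relMetricVia S a b / 2 := by
  set L := relMetricVia S a b
  set ε : ℕ → ℝ≥0∞ := fun k => (k : ℝ≥0∞)⁻¹
  have hε0 : ∀ k, 0 < ε k := fun k => by simp [ε]
  have hpath : ∀ k, ∃ σ : ℝ → X, ContinuousOn σ (Icc 0 1) ∧ (∀ t ∈ Icc (0:ℝ) 1, σ t ∈ S) ∧
      σ 0 ∈ Metric.eball a (ε k) ∧ σ 1 ∈ Metric.eball b (ε k) ∧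
      eVariationOn σ (Icc 0 1) < L + ε k := fun k =>
    exists_path_of_relMetricVia_lt (ENNReal.lt_add_right hab (hε0 k).ne')
      (Metric.eball_mem_nhds a (hε0 k)) (Metric.eball_mem_nhds b (hε0 k))
  choose σ hσ hσS hσ0 hσ1 hσL using hpath
  have hhalf : ∀ k, ∃ t ∈ Icc (0:ℝ) 1, relMetricVia S (σ k 0) (σ k t) ≤ (L + ε k) / 2 ∧
      relMetricVia S (σ k t) (σ k 1) ≤ (L + ε k) / 2 := fun k => by
    obtain ⟨t, ht, h0, h1⟩ := exists_halfway_of_le_eVariationOn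
      (lowerSemicontinuous_relMetricVia S) (hσ k)
      (fun r t => relMetricVia_le_eVariationOn (hσ k) (hσS k))
    have hℓ := ENNReal.div_le_div_right (hσL k).le 2
    exact ⟨t, ht, h0.trans hℓ, h1.trans hℓ⟩
  choose t ht hm0 hm1 using hhalf
  obtain ⟨m, hmY, φ, hφ, hm⟩ := hY.tendsto_subseq fun k => hSY (hσS k _ (ht k))
  have hε : Tendsto (ε ∘ φ) atTop (𝓝 0) :=
    ENNReal.tendsto_inv_nat_nhds_zero.comp hφ.tendsto_atTop
  have hbound : Tendsto (fun k => (L + ε (φ k)) / 2) atTop (𝓝 (L / 2)) := by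
    simpa using ENNReal.Tendsto.div_const (tendsto_const_nhds.add hε) (Or.inr two_ne_zero)
  have hends : ∀ {z : X} {w : ℕ → X}, (∀ k, w k ∈ Metric.eball z (ε k)) →
      Tendsto (w ∘ φ) atTop (𝓝 z) := fun hw =>
    tendsto_iff_edist_tendsto_0.2 (tendsto_of_tendsto_of_tendsto_of_le_of_le tendsto_const_nhds hε
      (fun _ => zero_le) fun k => (hw (φ k)).le)
  have hclosed := (lowerSemicontinuous_relMetricVia S).isClosed_epigraph
  exact ⟨m, hmY,
    hclosed.mem_of_tendsto (((hends hσ0).prodMk_nhds hm).prodMk_nhds hbound)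
      (Eventually.of_forall fun k => hm0 (φ k)),
    hclosed.mem_of_tendsto ((hm.prodMk_nhds (hends hσ1)).prodMk_nhds hbound)
      (Eventually.of_forall fun k => hm1 (φ k))⟩

end Midpoints

section Dyadic

variable {X : Type*}

def IsMidpointMap (ρ : X → X → ℝ≥0∞) (Y : Set X) (mid : X → X → X) : Prop :=
  ∀ p ∈ Y, ∀ q ∈ Y, mid p q ∈ Y ∧ ρ p (mid p q) ≤ ρ p q / 2 ∧ ρ (mid p q) q ≤ ρ p q / 2

/-- `dyadicPoints mid x y m j` stands for the point at parameter `j / 2 ^ m` of a path from `x`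
to `y`: each generation inserts `mid` of consecutive points of the previous one. -/
def dyadicPoints (mid : X → X → X) (x y : X) : ℕ → ℕ → X
  | 0, j => if j = 0 then x else y
  | m + 1, j => if Even j then dyadicPoints mid x y m (j / 2)
      else mid (dyadicPoints mid x y m (j / 2)) (dyadicPoints mid x y m (j / 2 + 1))

variable {mid : X → X → X} {x y : X}

@[simp]
theorem dyadicPoints_succ_two_mul (m j : ℕ) :
    dyadicPoints mid x y (m + 1) (2 * j) = dyadicPoints mid x y m j := by
  simp [dyadicPoints]

theorem dyadicPoints_succ_two_mul_add_one (m j : ℕ) :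
    dyadicPoints mid x y (m + 1) (2 * j + 1) =
      mid (dyadicPoints mid x y m j) (dyadicPoints mid x y m (j + 1)) := by
  have h : (2 * j + 1) / 2 = j := by omega
  simp [dyadicPoints, h]

@[simp]
theorem dyadicPoints_zero_right (m : ℕ) : dyadicPoints mid x y m 0 = x := by
  induction m with
  | zero => simp [dyadicPoints]
  | succ m ih => simpa [ih] using dyadicPoints_succ_two_mul (mid := mid) (x := x) (y := y) m 0

@[simp]
theorem dyadicPoints_two_pow (m : ℕ) : dyadicPoints mid x y m (2 ^ m) = y := by
  induction m with
  | zero => simp [dyadicPoints]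
  | succ m ih => rw [pow_succ', dyadicPoints_succ_two_mul, ih]

variable {ρ : X → X → ℝ≥0∞} {Y : Set X}

theorem dyadicPoints_mem (hmid : IsMidpointMap ρ Y mid) (hx : x ∈ Y) (hy : y ∈ Y) (m j : ℕ) :
    dyadicPoints mid x y m j ∈ Y := by
  induction m generalizing j with
  | zero => by_cases hj : j = 0 <;> simp [dyadicPoints, hj, hx, hy]
  | succ m ih =>
    obtain ⟨k, rfl | rfl⟩ := Nat.even_or_odd' j
    · simpa using ih k
    · rw [dyadicPoints_succ_two_mul_add_one]
      exact (hmid _ (ih k) _ (ih (k + 1))).1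

theorem ENNReal.div_two_pow_div_two (a : ℝ≥0∞) (m : ℕ) : a / 2 ^ m / 2 = a / 2 ^ (m + 1) := by
  rw [pow_succ, div_eq_mul_inv, div_eq_mul_inv, div_eq_mul_inv, mul_assoc,
    ENNReal.mul_inv (by simp) (by simp)]

theorem dyadicPoints_step_le (hmid : IsMidpointMap ρ Y mid) (hrefl : ∀ p ∈ Y, ρ p p = 0)
    (hx : x ∈ Y) (hy : y ∈ Y) (m j : ℕ) :
    ρ (dyadicPoints mid x y m j) (dyadicPoints mid x y m (j + 1)) ≤ ρ x y / 2 ^ m := by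
  induction m generalizing j with
  | zero => rcases j with _ | j <;> simp [dyadicPoints, hrefl y hy]
  | succ m ih =>
    have hmem := dyadicPoints_mem hmid hx hy m
    rw [← ENNReal.div_two_pow_div_two]
    obtain ⟨k, rfl | rfl⟩ := Nat.even_or_odd' j
    · rw [dyadicPoints_succ_two_mul_add_one, dyadicPoints_succ_two_mul]
      exact (hmid _ (hmem k) _ (hmem (k + 1))).2.1.trans (ENNReal.div_le_div_right (ih k) 2)
    · rw [dyadicPoints_succ_two_mul_add_one, show 2 * k + 1 + 1 = 2 * (k + 1) by ring,
        dyadicPoints_succ_two_mul]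
      exact (hmid _ (hmem k) _ (hmem (k + 1))).2.2.trans (ENNReal.div_le_div_right (ih k) 2)

theorem dyadicPoints_div_two_le (hmid : IsMidpointMap ρ Y mid) (hrefl : ∀ p ∈ Y, ρ p p = 0)
    (hx : x ∈ Y) (hy : y ∈ Y) (m j : ℕ) :
    ρ (dyadicPoints mid x y m (j / 2)) (dyadicPoints mid x y (m + 1) j) ≤ ρ x y / 2 ^ (m + 1) := by
  have hmem := dyadicPoints_mem hmid hx hy m
  obtain ⟨k, rfl | rfl⟩ := Nat.even_or_odd' j
  · simp [hrefl _ (hmem k)]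
  · rw [dyadicPoints_succ_two_mul_add_one, show (2 * k + 1) / 2 = k by omega,
      ← ENNReal.div_two_pow_div_two]
    exact (hmid _ (hmem k) _ (hmem (k + 1))).2.1.trans
      (ENNReal.div_le_div_right (dyadicPoints_step_le hmid hrefl hx hy m k) 2)

theorem dyadicPoints_le_mul (hmid : IsMidpointMap ρ Y mid) (hrefl : ∀ p ∈ Y, ρ p p = 0)
    (htri : ∀ p ∈ Y, ∀ q ∈ Y, ∀ r ∈ Y, ρ p r ≤ ρ p q + ρ q r) (hx : x ∈ Y) (hy : y ∈ Y)
    (m i k : ℕ) :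
    ρ (dyadicPoints mid x y m i) (dyadicPoints mid x y m (i + k)) ≤ k * (ρ x y / 2 ^ m) := by
  have hmem := dyadicPoints_mem hmid hx hy m
  induction k with
  | zero => simp [hrefl _ (hmem i)]
  | succ k ih =>
    calc _ ≤ ρ (dyadicPoints mid x y m i) (dyadicPoints mid x y m (i + k)) +
          ρ (dyadicPoints mid x y m (i + k)) (dyadicPoints mid x y m (i + k + 1)) :=
          htri _ (hmem _) _ (hmem _) _ (hmem _)
      _ ≤ k * (ρ x y / 2 ^ m) + ρ x y / 2 ^ m :=
          add_le_add ih (dyadicPoints_step_le hmid hrefl hx hy m (i + k))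
      _ = (k + 1 : ℕ) * (ρ x y / 2 ^ m) := by push_cast; ring

end Dyadic

section ConstantSpeed

variable {X : Type*} {mid : X → X → X} {x y : X} {ρ : X → X → ℝ≥0∞} {Y : Set X}

theorem cauchySeq_dyadicPoints_floor [PseudoEMetricSpace X] (hmid : IsMidpointMap ρ Y mid)
    (hrefl : ∀ p ∈ Y, ρ p p = 0) (hedist : ∀ p ∈ Y, ∀ q ∈ Y, edist p q ≤ ρ p q)
    (hx : x ∈ Y) (hy : y ∈ Y) (hxy : ρ x y ≠ ⊤) (t : ℝ) :
    CauchySeq fun m => dyadicPoints mid x y m ⌊t * 2 ^ m⌋₊ := by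
  refine cauchySeq_of_edist_le_geometric_two _ hxy fun m => ?_
  have hmem := dyadicPoints_mem hmid hx hy
  have hfloor : ⌊t * 2 ^ (m + 1)⌋₊ / 2 = ⌊t * 2 ^ m⌋₊ := by
    rw [← Nat.floor_div_ofNat, pow_succ, ← mul_assoc, mul_div_cancel_right₀ _ two_ne_zero]
  calc _ ≤ _ := hedist _ (hmem _ _) _ (hmem _ _)
    _ ≤ ρ x y / 2 ^ (m + 1) := hfloor ▸ dyadicPoints_div_two_le hmid hrefl hx hy m _
    _ ≤ ρ x y / 2 ^ m := ENNReal.div_le_div_left (pow_le_pow_right₀ one_le_two m.le_succ) _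

theorem dyadicPoints_floor_le (hmid : IsMidpointMap ρ Y mid) (hrefl : ∀ p ∈ Y, ρ p p = 0)
    (htri : ∀ p ∈ Y, ∀ q ∈ Y, ∀ r ∈ Y, ρ p r ≤ ρ p q + ρ q r) (hx : x ∈ Y) (hy : y ∈ Y)
    {s t : ℝ} (hs : 0 ≤ s) (hst : s ≤ t) (m : ℕ) :
    ρ (dyadicPoints mid x y m ⌊s * 2 ^ m⌋₊) (dyadicPoints mid x y m ⌊t * 2 ^ m⌋₊) ≤
      ENNReal.ofReal (t - s) * ρ x y + ρ x y / 2 ^ m := by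
  have hfl : ⌊s * 2 ^ m⌋₊ ≤ ⌊t * 2 ^ m⌋₊ := Nat.floor_le_floor (by gcongr)
  set k := ⌊t * 2 ^ m⌋₊ - ⌊s * 2 ^ m⌋₊
  have hk : (k : ℝ) ≤ (t - s) * 2 ^ m + 1 := by
    have h1 : (⌊t * 2 ^ m⌋₊ : ℝ) ≤ t * 2 ^ m := Nat.floor_le (by
      have := hs.trans hst; positivity)
    have h2 : s * 2 ^ m < ⌊s * 2 ^ m⌋₊ + 1 := Nat.lt_floor_add_one _
    rw [Nat.cast_sub hfl]
    linarith
  have hk' : (k : ℝ≥0∞) ≤ ENNReal.ofReal (t - s) * 2 ^ m + 1 := by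
    have hst' : 0 ≤ (t - s) * 2 ^ m := by have := sub_nonneg.2 hst; positivity
    simpa [ENNReal.ofReal_add hst' zero_le_one, ENNReal.ofReal_mul (sub_nonneg.2 hst),
      ENNReal.ofReal_pow] using ENNReal.ofReal_le_ofReal hk
  calc _ ≤ k * (ρ x y / 2 ^ m) := by
        simpa [k, Nat.add_sub_cancel' hfl] using
          dyadicPoints_le_mul hmid hrefl htri hx hy m ⌊s * 2 ^ m⌋₊ k
    _ ≤ (ENNReal.ofReal (t - s) * 2 ^ m + 1) * (ρ x y / 2 ^ m) := by gcongr
    _ = _ := by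
        rw [add_mul, one_mul, mul_assoc, ENNReal.mul_div_cancel (by simp) (by simp)]

theorem exists_path_eq_ofReal_sub_mul [EMetricSpace X] (hY : IsComplete Y)
    (hρ : LowerSemicontinuous (Function.uncurry ρ)) (hedist : ∀ p ∈ Y, ∀ q ∈ Y, edist p q ≤ ρ p q)
    (hrefl : ∀ p ∈ Y, ρ p p = 0) (htri : ∀ p ∈ Y, ∀ q ∈ Y, ∀ r ∈ Y, ρ p r ≤ ρ p q + ρ q r)
    (hmid : ∀ p ∈ Y, ∀ q ∈ Y, ∃ m ∈ Y, ρ p m ≤ ρ p q / 2 ∧ ρ m q ≤ ρ p q / 2)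
    (hx : x ∈ Y) (hy : y ∈ Y) (hxy : ρ x y ≠ ⊤) :
    ∃ γ : ℝ → X, (∀ t, γ t ∈ Y) ∧ γ 0 = x ∧ γ 1 = y ∧
      ∀ s t, 0 ≤ s → s ≤ t → t ≤ 1 → ρ (γ s) (γ t) = ENNReal.ofReal (t - s) * ρ x y := by
  choose! mid hmidY hmid₁ hmid₂ using hmid
  have hmid : IsMidpointMap ρ Y mid := fun p hp q hq =>
    ⟨hmidY p hp q hq, hmid₁ p hp q hq, hmid₂ p hp q hq⟩
  have hlim : ∀ t : ℝ, ∃ z ∈ Y,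
      Tendsto (fun m => dyadicPoints mid x y m ⌊t * 2 ^ m⌋₊) atTop (𝓝 z) := fun t =>
    cauchySeq_tendsto_of_isComplete hY (fun m => dyadicPoints_mem hmid hx hy m _)
      (cauchySeq_dyadicPoints_floor hmid hrefl hedist hx hy hxy t)
  choose γ hγY hγ using hlim
  have hγ0 : γ 0 = x := tendsto_nhds_unique (hγ 0) (by simp)
  have hγ1 : γ 1 = y := by
    have hfloor (m : ℕ) : ⌊(1 : ℝ) * 2 ^ m⌋₊ = 2 ^ m := by
      rw [one_mul]; exact_mod_cast Nat.floor_natCast (R := ℝ) (2 ^ m)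
    refine tendsto_nhds_unique (hγ 1) ?_
    simp only [hfloor, dyadicPoints_two_pow]
    exact tendsto_const_nhds
  set L := ρ x y
  have hupper : ∀ s t, 0 ≤ s → s ≤ t → ρ (γ s) (γ t) ≤ ENNReal.ofReal (t - s) * L := by
    intro s t hs hst
    have hbound : Tendsto (fun m : ℕ => ENNReal.ofReal (t - s) * L + L / 2 ^ m) atTop
        (𝓝 (ENNReal.ofReal (t - s) * L)) := by
      simpa using tendsto_const_nhds.add (ENNReal.Tendsto.const_div
        (ENNReal.tendsto_pow_atTop_nhds_top_iff.2 one_lt_two) (Or.inr hxy))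
    exact hρ.isClosed_epigraph.mem_of_tendsto (((hγ s).prodMk_nhds (hγ t)).prodMk_nhds hbound)
      (Eventually.of_forall (dyadicPoints_floor_le hmid hrefl htri hx hy hs hst))
  refine ⟨γ, hγY, hγ0, hγ1, fun s t hs hst ht => le_antisymm (hupper s t hs hst) ?_⟩
  -- the upper bounds on `[0, s]`, `[s, t]`, `[t, 1]` sum to `L`, which the triangle inequality
  -- bounds by the sum of the actual distances
  have h := calc
    ENNReal.ofReal s * L + ENNReal.ofReal (t - s) * L + ENNReal.ofReal (1 - t) * L = L := by
        rw [← add_mul, ← add_mul, ← ENNReal.ofReal_add hs (sub_nonneg.2 hst),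
          ← ENNReal.ofReal_add (by linarith) (sub_nonneg.2 ht)]
        simp
    _ ≤ ρ x (γ s) + ρ (γ s) y := htri _ hx _ (hγY s) _ hy
    _ ≤ ρ x (γ s) + ρ (γ s) (γ t) + ρ (γ t) y := by
        rw [add_assoc]; gcongr; exact htri _ (hγY s) _ (hγY t) _ hy
    _ ≤ ENNReal.ofReal s * L + ρ (γ s) (γ t) + ENNReal.ofReal (1 - t) * L := by
        gcongr
        · simpa [hγ0] using hupper 0 s le_rfl hs
        · simpa [hγ1] using hupper t 1 (hs.trans hst) ht
  exact (ENNReal.add_le_add_iff_left (by finiteness)).1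
    ((ENNReal.add_le_add_iff_right (by finiteness)).1 h)

theorem lipschitzOnWith_one_of_edist_le [PseudoEMetricSpace X] {f : ℝ → X} {s : Set ℝ}
    (hf : ∀ u ∈ s, ∀ v ∈ s, u ≤ v → edist (f u) (f v) ≤ ENNReal.ofReal (v - u)) :
    LipschitzOnWith 1 f s := by
  intro u hu v hv
  rw [ENNReal.coe_one, one_mul, edist_dist, Real.dist_eq]
  rcases le_total u v with h | h
  · rw [abs_sub_comm, abs_of_nonneg (sub_nonneg.2 h)]
    exact hf u hu v hv h
  · rw [edist_comm, abs_of_nonneg (sub_nonneg.2 h)]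
    exact hf v hv u hu h

theorem exists_unitSpeed_path_of_midpoints [EMetricSpace X] (hY : IsComplete Y)
    (hρ : LowerSemicontinuous (Function.uncurry ρ)) (hedist : ∀ p ∈ Y, ∀ q ∈ Y, edist p q ≤ ρ p q)
    (hrefl : ∀ p ∈ Y, ρ p p = 0) (hsep : ∀ p ∈ Y, ∀ q ∈ Y, ρ p q = 0 → p = q)
    (htri : ∀ p ∈ Y, ∀ q ∈ Y, ∀ r ∈ Y, ρ p r ≤ ρ p q + ρ q r)
    (hmid : ∀ p ∈ Y, ∀ q ∈ Y, ∃ m ∈ Y, ρ p m ≤ ρ p q / 2 ∧ ρ m q ≤ ρ p q / 2)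
    (hx : x ∈ Y) (hy : y ∈ Y) (hxy : ρ x y ≠ ⊤) :
    ∃ γ : ℝ → X,
      let L := (ρ x y).toReal
      ContinuousOn γ (Icc 0 L) ∧ (∀ t ∈ Icc (0:ℝ) L, γ t ∈ Y) ∧ γ 0 = x ∧ γ L = y ∧
      ∀ s t : ℝ, 0 ≤ s → s < t → t ≤ L → ρ (γ s) (γ t) = ENNReal.ofReal (t - s) := by
  obtain ⟨γ, hγY, hγ0, hγ1, hγ⟩ :=
    exists_path_eq_ofReal_sub_mul hY hρ hedist hrefl htri hmid hx hy hxy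
  rcases eq_or_ne (ρ x y) 0 with h0 | h0
  · obtain rfl := hsep x hx y hy h0
    refine ⟨fun _ => x, continuousOn_const, fun _ _ => hx, rfl, rfl, fun s t hs hst ht => ?_⟩
    simp only [h0, ENNReal.toReal_zero] at ht
    linarith
  set L := (ρ x y).toReal
  have hL : 0 < L := ENNReal.toReal_pos h0 hxy
  have hγL : ∀ s t, 0 ≤ s → s ≤ t → t ≤ L →
      ρ (γ (s / L)) (γ (t / L)) = ENNReal.ofReal (t - s) := by
    intro s t hs hst ht
    rw [hγ _ _ (by positivity) (by gcongr) ((div_le_one hL).2 ht), ← ENNReal.ofReal_toReal hxy,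
      ← ENNReal.ofReal_mul (by linarith [div_le_div_of_nonneg_right hst hL.le])]
    congr 1
    field_simp
    exact mul_comm _ _
  have hcont : ContinuousOn (fun u => γ (u / L)) (Icc 0 L) :=
    (lipschitzOnWith_one_of_edist_le fun u hu v hv huv =>
      (hedist _ (hγY _) _ (hγY _)).trans (hγL u v hu.1 huv hv.2).le).continuousOn
  exact ⟨fun u => γ (u / L), hcont, fun _ _ => hγY _, by simpa using hγ0,
    by simpa [div_self hL.ne'] using hγ1, fun s t hs hst ht => hγL s t hs hst.le ht⟩

end ConstantSpeed

theorem statement2_general {X : Type*} [MetricSpace X]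
    (hX : ∀ x y : X, edist x y = infPathLength Set.univ x y)
    (Y : Set X)
    (hYcpt : IsCompact Y)
    (hfin : ∀ x ∈ Y, ∀ y ∈ Y, relMetric Y x y < ⊤)
    (hmet : IsMetricOn (relMetric Y) Y) :
    ∀ x ∈ Y, ∀ y ∈ Y, ∃ γ : ℝ → X,
      let L := (relMetric Y x y).toReal
      ContinuousOn γ (Set.Icc 0 L) ∧ (∀ t ∈ Set.Icc (0:ℝ) L, γ t ∈ Y) ∧
      γ 0 = x ∧ γ L = y ∧
      ∀ s t : ℝ, 0 ≤ s → s < t → t ≤ L →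
        relMetric Y (γ s) (γ t) = ENNReal.ofReal (t - s) := by
  intro x hx y hy
  obtain ⟨hrefl, hsep, -, htri⟩ := hmet
  have hedist (p q : X) : edist p q ≤ relMetric Y p q :=
    edist_le_relMetricVia (fun a b => (hX a b).trans_le (infPathLength_anti (subset_univ _) a b))
      p q
  exact exists_unitSpeed_path_of_midpoints hYcpt.isComplete (lowerSemicontinuous_relMetricVia _)
    (fun p _ q _ => hedist p q) hrefl hsep htri
    (fun p hp q hq => exists_midpoint_relMetricVia interior_subset hYcpt (hfin p hp q hq).ne)
    hx hy (hfin x hx y hy).ne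

/-- Theorem 2.3: if the relative metric `ρ_Y` of a compact connected C⁰-submanifold with
nonempty boundary is finite and is a metric on `Y`, then any two points of `Y` are joined
by a shortest curve `γ : [0,L] → Y` in `ρ_Y`, i.e. `ρ_Y(γ(s),γ(t)) = t - s`. -/
theorem statement2 {X : Type*} [MetricSpace X] {n : ℕ} (hn : 2 ≤ n) [NeZero n]
    [ChartedSpace (EuclideanSpace ℝ (Fin n)) X] [IsManifold (𝓡 n) (⊤ : ℕ∞) X]
    [ConnectedSpace X]
    (hX : ∀ x y : X, edist x y = infPathLength Set.univ x y)
    (Y : Set X) [ChartedSpace (EuclideanHalfSpace n) Y]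
    (hYcpt : IsCompact Y) (hYconn : IsConnected Y) (hbd : (frontier Y).Nonempty)
    (hfin : ∀ x ∈ Y, ∀ y ∈ Y, relMetric Y x y < ⊤)
    (hmet : IsMetricOn (relMetric Y) Y) :
    ∀ x ∈ Y, ∀ y ∈ Y, ∃ γ : ℝ → X,
      let L := (relMetric Y x y).toReal
      ContinuousOn γ (Set.Icc 0 L) ∧ (∀ t ∈ Set.Icc (0:ℝ) L, γ t ∈ Y) ∧
      γ 0 = x ∧ γ L = y ∧
      ∀ s t : ℝ, 0 ≤ s → s < t → t ≤ L →
        relMetric Y (γ s) (γ t) = ENNReal.ofReal (t - s) :=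
  statement2_general hX Y hYcpt hfin hmet
end
end

section
/- There exists a 2-dimensional compact connected C⁰-submanifold Y of the Euclidean plane ℝ² with nonempty boundary, and a boundary point O ∈ ∂Y, such that ρ_Y(O,E) = ∞ for every E ∈ Y \ {O}; i.e., condition (i) of finiteness of the relative metric can fail for C⁰-submanifolds. -/
open Set Filter Topology Manifold ENNReal EuclideanGeometry

noncomputable section

/-!
Shear the closed annulus `1/2 ≤ |p - (1,0)| ≤ 1`, which meets the `y`-axis only at the origin `O`,
by the map `(x, y) ↦ (x, x y + √x sin x⁻¹)`. The image `Y` is still a topological annulus, and it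
lies in the strip `|y - √x sin x⁻¹| ≤ x`. At the abscissae `x_k = (π/2 + kπ)⁻¹` this strip has
half-width `x_k` but is centred at the alternating heights `±√x_k`, so a path in `Y` climbs at
least `√x_{k+1}` between the abscissae `x_{k+1}` and `x_k`. As `∑ √x_k = ∞`, paths in `Y` starting
ever closer to `O` and ending near a fixed `E ≠ O` have unbounded length.
-/

theorem exists_monotone_hitting_times {g : ℝ → ℝ} {a b : ℝ} (hab : a ≤ b)
    (hg : ContinuousOn g (Icc a b)) {c : ℕ → ℝ} (hc : Monotone c) :
    ∀ {n : ℕ}, g a ≤ c 0 → c n ≤ g b →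
      ∃ t : ℕ → ℝ, Monotone t ∧ (∀ i, t i ∈ Icc a b) ∧ ∀ i ≤ n, g (t i) = c i
  | 0, ha, hb => by
    obtain ⟨s, hs, hgs⟩ := intermediate_value_Icc hab hg ⟨ha, hb⟩
    exact ⟨fun _ => s, monotone_const, fun _ => hs, fun i hi => by
      rw [Nat.le_zero.1 hi, hgs]⟩
  | n + 1, ha, hb => by
    obtain ⟨t, ht_mono, ht_mem, ht_val⟩ :=
      exists_monotone_hitting_times hab hg hc ha ((hc n.le_succ).trans hb)
    have htn : g (t n) = c n := ht_val n le_rfl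
    obtain ⟨s, hs, hgs⟩ := intermediate_value_Icc (ht_mem n).2
      (hg.mono (Icc_subset_Icc_left (ht_mem n).1)) ⟨htn ▸ hc n.le_succ, hb⟩
    refine ⟨fun i => if i ≤ n then t i else s, fun i j hij => ?_, fun i => ?_, fun i hi => ?_⟩
    · dsimp only
      split_ifs with hi hj hj
      exacts [ht_mono hij, (ht_mono hi).trans hs.1, absurd (hij.trans hj) hi, le_rfl]
    · dsimp only; split_ifs
      exacts [ht_mem i, ⟨(ht_mem n).1.trans hs.1, hs.2⟩]
    · dsimp only; split_ifs with hin
      exacts [ht_val i hin, by rw [hgs, show i = n + 1 by omega]]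

theorem mem_frontier_of_forall_nonneg {ι : Type*} [Fintype ι] [DecidableEq ι] {i : ι}
    {s : Set (EuclideanSpace ℝ ι)} (hs : ∀ q ∈ s, 0 ≤ q i) {x : EuclideanSpace ℝ ι} (hx : x ∈ s)
    (hxi : x i = 0) : x ∈ frontier s := by
  refine ⟨subset_closure hx, fun hint => ?_⟩
  obtain ⟨ε, hε, hball⟩ := Metric.isOpen_iff.1 isOpen_interior x hint
  have hmem : x - (ε / 2) • EuclideanSpace.single i 1 ∈ s :=
    interior_subset <| hball <| by simp [norm_smul, abs_of_pos hε, hε]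
  have hneg := hs _ hmem
  simp [hxi] at hneg
  linarith

def halfPlaneHomeomorph :
    ModelProd (EuclideanHalfSpace 1) (EuclideanSpace ℝ (Fin 1)) ≃ₜ EuclideanHalfSpace 2 where
  toFun q := ⟨!₂[q.1.1 0, q.2 0], q.1.2⟩
  invFun x := (⟨!₂[x.1 0], x.2⟩, !₂[x.1 1])
  left_inv q := by
    ext <;> simp [Fin.fin_one_eq_zero]
  right_inv x := by
    ext i; fin_cases i <;> rfl
  continuous_toFun := by fun_prop
  continuous_invFun := by fun_prop

local notation "ℝ²" => EuclideanSpace ℝ (Fin 2)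

open Real Metric

namespace OscillatingStrip

def osc (x : ℝ) : ℝ := √x * Real.sin x⁻¹

theorem osc_zero : osc 0 = 0 := by simp [osc]

theorem continuous_osc : Continuous osc := by
  refine continuous_iff_continuousAt.2 fun x => ?_
  rcases eq_or_ne x 0 with rfl | hx
  · rw [ContinuousAt, osc_zero]
    refine squeeze_zero_norm (fun t => ?_) (by simpa using Real.continuous_sqrt.tendsto 0)
    rw [osc, norm_mul, Real.norm_of_nonneg (Real.sqrt_nonneg t)]
    exact mul_le_of_le_one_right (Real.sqrt_nonneg t) (Real.abs_sin_le_one _)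
  · exact Real.continuous_sqrt.continuousAt.mul
      (Real.continuous_sin.continuousAt.comp (continuousAt_inv₀ hx))

def peak (k : ℕ) : ℝ := (π / 2 + k * π)⁻¹

theorem peak_pos (k : ℕ) : 0 < peak k := inv_pos.2 (by positivity)

theorem peak_antitone : Antitone peak := fun k m hkm =>
  inv_anti₀ (by positivity) (by gcongr)

theorem osc_peak (k : ℕ) : osc (peak k) = (-1) ^ k * √(peak k) := by
  rw [osc, peak, inv_inv, Real.sin_add_nat_mul_pi, Real.sin_pi_div_two, mul_one, mul_comm]

theorem peak_lt (k : ℕ) : peak k < 1 / (k + 1) := by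
  rw [peak, one_div]
  exact inv_strictAnti₀ (by positivity) (by nlinarith [Real.pi_gt_three])

theorem two_mul_peak_le_sqrt {k : ℕ} (hk : 1 ≤ k) : 2 * peak k ≤ √(peak k) := by
  have hp := peak_pos k
  have h4 : peak k ≤ 1 / 4 := (peak_antitone hk).trans <| by
    rw [peak, one_div]
    exact inv_anti₀ (by norm_num) (by push_cast; nlinarith [Real.pi_gt_three])
  rw [Real.le_sqrt (by positivity) hp.le]
  nlinarith

theorem inv_two_mul_le_sqrt_peak {N : ℕ} (hN : 2 ≤ N) : (2 * N : ℝ)⁻¹ ≤ √(peak (N ^ 2)) := by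
  have hN' : (2 : ℝ) ≤ N := by exact_mod_cast hN
  rw [Real.le_sqrt (by positivity) (peak_pos _).le, peak, inv_pow]
  exact inv_anti₀ (by positivity) (by push_cast; nlinarith [Real.pi_lt_d2])

theorem exists_le_mul_sqrt_peak (K₀ n : ℕ) :
    ∃ K, K₀ ≤ K ∧ (n : ℝ) ≤ (K - K₀ : ℕ) * √(peak K) := by
  set N := K₀ + 2 * n + 2 with hN_def
  have hK₀ : K₀ ≤ N ^ 2 := (by omega : K₀ ≤ N).trans (Nat.le_self_pow two_ne_zero N)
  refine ⟨N ^ 2, hK₀, ?_⟩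
  have h2N : (2 * N : ℝ) = 2 * K₀ + 4 * n + 4 := by push_cast [N]; ring
  calc (n : ℝ) ≤ (N ^ 2 - K₀ : ℕ) * (2 * N : ℝ)⁻¹ := by
        rw [Nat.cast_sub hK₀, ← div_eq_mul_inv, le_div_iff₀ (by positivity), h2N]
        push_cast [N]; nlinarith
    _ ≤ (N ^ 2 - K₀ : ℕ) * √(peak (N ^ 2)) := by
        gcongr; exact inv_two_mul_le_sqrt_peak (by omega)

def strip : Set ℝ² := {q | |q 1 - osc (q 0)| ≤ q 0}

theorem nonneg_of_mem_strip {q : ℝ²} (hq : q ∈ strip) : 0 ≤ q 0 := (abs_nonneg _).trans hq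

theorem pos_of_mem_strip {q : ℝ²} (hq : q ∈ strip) (hq0 : q ≠ 0) : 0 < q 0 := by
  refine (nonneg_of_mem_strip hq).lt_of_ne fun h => hq0 ?_
  have h1 : q 1 = 0 := by simpa [strip, ← h, osc_zero] using hq
  ext i; fin_cases i <;> simp [← h, h1]

theorem sqrt_peak_le_dist {k : ℕ} (hk : 1 ≤ k) {p q : ℝ²} (hp : p ∈ strip) (hq : q ∈ strip)
    (hp0 : p 0 = peak k) (hq0 : q 0 = peak (k + 1)) : √(peak (k + 1)) ≤ dist p q := by
  have hmono : peak (k + 1) ≤ peak k := peak_antitone k.le_succ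
  have hsq : √(peak (k + 1)) ≤ √(peak k) := Real.sqrt_le_sqrt hmono
  have h2 := two_mul_peak_le_sqrt hk
  have hdist : |p 1 - q 1| ≤ dist p q := by
    simpa [Real.dist_eq] using PiLp.dist_apply_le p q 1
  simp only [strip, mem_ofPred_eq, hp0, hq0, osc_peak, abs_le, pow_succ] at hp hq
  refine le_trans ?_ hdist
  rcases neg_one_pow_eq_or ℝ k with hs | hs <;> rw [hs] at hp hq <;>
    [rw [le_abs]; rw [abs_sub_comm, le_abs]] <;> left <;> linarith

theorem le_eVariationOn_of_mapsTo_strip {K₀ K : ℕ} (hK₀ : 1 ≤ K₀) (hK : K₀ ≤ K) {γ : ℝ → ℝ²}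
    (hγ : ContinuousOn γ (Icc 0 1)) (hγS : ∀ t ∈ Icc (0 : ℝ) 1, γ t ∈ strip)
    (h0 : γ 0 0 ≤ peak K) (h1 : peak K₀ ≤ γ 1 0) :
    ENNReal.ofReal ((K - K₀ : ℕ) * √(peak K)) ≤ eVariationOn γ (Icc 0 1) := by
  obtain ⟨t, ht_mono, ht_mem, ht_val⟩ := exists_monotone_hitting_times zero_le_one
    (g := fun t => γ t 0) ((PiLp.continuous_apply 2 _ 0).comp_continuousOn hγ)
    (c := fun i => peak (K - i))
    (fun i j hij => peak_antitone (by omega)) (n := K - K₀) (by simpa using h0)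
    (by simpa [Nat.sub_sub_self hK] using h1)
  have hstep : ∀ i ∈ Finset.range (K - K₀),
      ENNReal.ofReal √(peak K) ≤ edist (γ (t (i + 1))) (γ (t i)) := by
    intro i hi
    rw [Finset.mem_range] at hi
    have hk : K - i = K - (i + 1) + 1 := by omega
    rw [edist_dist]
    refine ENNReal.ofReal_le_ofReal ((Real.sqrt_le_sqrt (peak_antitone (Nat.sub_le K i))).trans ?_)
    rw [hk]
    refine sqrt_peak_le_dist (by omega) (hγS _ (ht_mem _)) (hγS _ (ht_mem _))
      (ht_val (i + 1) hi) ?_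
    rw [← hk]; exact ht_val i hi.le
  calc ENNReal.ofReal ((K - K₀ : ℕ) * √(peak K))
      = ∑ _i ∈ Finset.range (K - K₀), ENNReal.ofReal √(peak K) := by
        rw [ENNReal.ofReal_mul (Nat.cast_nonneg _), ENNReal.ofReal_natCast, Finset.sum_const,
          Finset.card_range, nsmul_eq_mul]
    _ ≤ ∑ i ∈ Finset.range (K - K₀), edist (γ (t (i + 1))) (γ (t i)) := Finset.sum_le_sum hstep
    _ ≤ eVariationOn γ (Icc 0 1) := eVariationOn.sum_le ht_mono ht_mem

theorem le_infPathLength_of_subset_strip {S : Set ℝ²} (hS : S ⊆ strip) {K₀ K : ℕ} (hK₀ : 1 ≤ K₀)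
    (hK : K₀ ≤ K) {u v : ℝ²} (hu : u 0 ≤ peak K) (hv : peak K₀ ≤ v 0) :
    ENNReal.ofReal ((K - K₀ : ℕ) * √(peak K)) ≤ infPathLength S u v :=
  le_iInf₂ fun _ ⟨hγ, hγS, hγ0, hγ1⟩ => le_eVariationOn_of_mapsTo_strip hK₀ hK hγ
    (fun t ht => hS (hγS t ht)) (hγ0 ▸ hu) (hγ1 ▸ hv)

theorem relMetricVia_zero_eq_top {S : Set ℝ²} (hS : S ⊆ strip) {E : ℝ²} (hE : 0 < E 0) :
    relMetricVia S 0 E = ⊤ := by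
  rw [eq_top_iff, ← ENNReal.iSup_natCast]
  refine iSup_le fun n => ?_
  obtain ⟨m, hm⟩ := exists_nat_one_div_lt hE
  obtain ⟨K, hK, hn⟩ := exists_le_mul_sqrt_peak (m + 1) n
  have hcoord : Continuous fun p : ℝ² => p 0 := PiLp.continuous_apply 2 _ 0
  have hU : {p : ℝ² | p 0 < peak K} ∈ 𝓝[S] 0 :=
    mem_nhdsWithin_of_mem_nhds <|
      (isOpen_lt hcoord continuous_const).mem_nhds (by simpa using peak_pos K)
  have hV : {p : ℝ² | peak (m + 1) < p 0} ∈ 𝓝[S] E :=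
    mem_nhdsWithin_of_mem_nhds <| (isOpen_lt continuous_const hcoord).mem_nhds <|
      (peak_antitone m.le_succ).trans_lt ((peak_lt m).trans (by push_cast; exact hm))
  refine le_liminf_of_le (by isBoundedDefault) <| eventually_of_mem (prod_mem_prod hU hV) ?_
  rintro ⟨u, v⟩ ⟨hu, hv⟩
  rw [← ENNReal.ofReal_natCast]
  exact (ENNReal.ofReal_le_ofReal hn).trans
    (le_infPathLength_of_subset_strip hS (by omega) hK (le_of_lt hu) (le_of_lt hv))

def center : ℝ² := EuclideanSpace.single 0 1

theorem sq_add_sq_le_one_of_mem_closedBall {p : ℝ²} (hp : p ∈ closedBall center 1) :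
    (p 0 - 1) ^ 2 + p 1 ^ 2 ≤ 1 := by
  have h : dist p center ^ 2 = (p 0 - 1) ^ 2 + p 1 ^ 2 := by
    rw [EuclideanSpace.dist_eq, Real.sq_sqrt (by positivity)]
    simp [center, Fin.sum_univ_two, Real.dist_eq, sq_abs]
  exact h ▸ pow_le_one₀ dist_nonneg hp

def shear (p : ℝ²) : ℝ² := !₂[p 0, p 0 * p 1 + osc (p 0)]

theorem continuous_shear : Continuous shear := by
  have := continuous_osc
  unfold shear; fun_prop

theorem shear_zero : shear 0 = 0 := by
  ext i; fin_cases i <;> simp [shear, osc_zero]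

theorem shear_mem_strip {p : ℝ²} (hp : p ∈ closedBall center 1) : shear p ∈ strip := by
  have h := sq_add_sq_le_one_of_mem_closedBall hp
  have hp0 : 0 ≤ p 0 := by nlinarith
  have hp1 : |p 1| ≤ 1 := abs_le_one_iff_mul_self_le_one.2 (by nlinarith)
  simpa [strip, shear, abs_mul, abs_of_nonneg hp0] using mul_le_of_le_one_right hp0 hp1

theorem injOn_shear : InjOn shear (closedBall center 1) := by
  intro p hp q hq hpq
  have h0 : p 0 = q 0 := by simpa [shear] using congr_arg (· 0) hpq
  have h1 : p 0 * p 1 = q 0 * q 1 := by simpa [shear, h0] using congr_arg (· 1) hpq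
  have h1' : p 1 = q 1 := by
    rcases eq_or_ne (p 0) 0 with hz | hz
    · have hp1 := sq_add_sq_le_one_of_mem_closedBall hp
      have hq1 := sq_add_sq_le_one_of_mem_closedBall hq
      rw [hz] at hp1
      rw [← h0, hz] at hq1
      rw [pow_eq_zero_iff two_ne_zero |>.1 (by nlinarith : p 1 ^ 2 = 0),
        pow_eq_zero_iff two_ne_zero |>.1 (by nlinarith : q 1 ^ 2 = 0)]
    · exact mul_left_cancel₀ hz (h0 ▸ h1)
  ext i; fin_cases i <;> simp [h0, h1']

def annulusParam (ru : Icc (1 / 2 : ℝ) 1 × sphere (0 : ℝ²) 1) : ℝ² :=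
  center + (ru.1 : ℝ) • (ru.2 : ℝ²)

theorem continuous_annulusParam : Continuous annulusParam := by
  unfold annulusParam; fun_prop

theorem annulusParam_mem_closedBall (ru : Icc (1 / 2 : ℝ) 1 × sphere (0 : ℝ²) 1) :
    annulusParam ru ∈ closedBall center 1 := by
  obtain ⟨⟨r, hr⟩, ⟨u, hu⟩⟩ := ru
  rw [mem_sphere_zero_iff_norm] at hu
  simpa [annulusParam, norm_smul, hu, abs_of_nonneg ((by norm_num : (0 : ℝ) ≤ 1 / 2).trans hr.1)]
    using hr.2

theorem injective_annulusParam : Function.Injective annulusParam := by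
  rintro ⟨⟨r, hr⟩, ⟨u, hu⟩⟩ ⟨⟨s, hs⟩, ⟨v, hv⟩⟩ h
  rw [mem_sphere_zero_iff_norm] at hu hv
  have hr0 : 0 < r := lt_of_lt_of_le (by norm_num) hr.1
  have hs0 : 0 < s := lt_of_lt_of_le (by norm_num) hs.1
  have hru : r • u = s • v := add_left_cancel h
  have hrs : r = s := by
    simpa [norm_smul, hu, hv, abs_of_pos hr0, abs_of_pos hs0] using congr_arg norm hru
  subst hrs
  simp [smul_right_injective _ hr0.ne' hru]

def squeezedAnnulus : Set ℝ² := range (shear ∘ annulusParam)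

theorem continuous_shear_comp_annulusParam : Continuous (shear ∘ annulusParam) :=
  continuous_shear.comp continuous_annulusParam

theorem injective_shear_comp_annulusParam : Function.Injective (shear ∘ annulusParam) :=
  fun _ _ h => injective_annulusParam <|
    injOn_shear (annulusParam_mem_closedBall _) (annulusParam_mem_closedBall _) h

theorem squeezedAnnulus_subset_strip : squeezedAnnulus ⊆ strip := by
  rintro _ ⟨ru, rfl⟩
  exact shear_mem_strip (annulusParam_mem_closedBall ru)

theorem zero_mem_squeezedAnnulus : (0 : ℝ²) ∈ squeezedAnnulus := by
  have hc : ‖center‖ = 1 := by simp [center]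
  refine ⟨(⟨1, by norm_num, le_rfl⟩, ⟨-center, by simpa using hc⟩), ?_⟩
  simp [annulusParam, shear_zero]

theorem isCompact_squeezedAnnulus : IsCompact squeezedAnnulus :=
  isCompact_range continuous_shear_comp_annulusParam

theorem isConnected_squeezedAnnulus : IsConnected squeezedAnnulus := by
  have hsphere : IsConnected (sphere (0 : ℝ²) 1) :=
    isConnected_sphere (by simp [← Module.finrank_eq_rank]) 0 zero_le_one
  have := isConnected_iff_connectedSpace.1 (isConnected_Icc (by norm_num : (1 / 2 : ℝ) ≤ 1))
  have := isConnected_iff_connectedSpace.1 hsphere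
  exact isConnected_range continuous_shear_comp_annulusParam

theorem nonempty_chartedSpace_squeezedAnnulus :
    Nonempty (ChartedSpace (EuclideanHalfSpace 2) squeezedAnnulus) := by
  have : Fact ((1 / 2 : ℝ) < 1) := ⟨by norm_num⟩
  let _ := halfPlaneHomeomorph.symm.chartedSpace (H := EuclideanHalfSpace 2)
  let _ := ChartedSpace.comp (EuclideanHalfSpace 2)
    (ModelProd (EuclideanHalfSpace 1) (EuclideanSpace ℝ (Fin 1)))
    (Icc (1 / 2 : ℝ) 1 × sphere (0 : ℝ²) 1)
  exact ⟨(continuous_shear_comp_annulusParam.isClosedEmbedding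
    injective_shear_comp_annulusParam).isEmbedding.toHomeomorph.chartedSpace
      (H := EuclideanHalfSpace 2)⟩

end OscillatingStrip

open OscillatingStrip in
/-- Remark 2.1: there is a 2-dimensional compact connected C⁰-submanifold `Y` of the
Euclidean plane with nonempty boundary and a boundary point `O` with `ρ_Y(O,E) = ∞` for
all `E ∈ Y \ {O}`; i.e. the finiteness condition (i) may fail. -/
theorem statement10 :
    ∃ Y : Set (EuclideanSpace ℝ (Fin 2)),
      IsCompact Y ∧ IsConnected Y ∧
      Nonempty (ChartedSpace (EuclideanHalfSpace 2) Y) ∧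
      (frontier Y).Nonempty ∧
      ∃ O ∈ frontier Y, ∀ E ∈ Y \ {O}, relMetric Y O E = ⊤ := by
  have hO : (0 : ℝ²) ∈ frontier squeezedAnnulus :=
    mem_frontier_of_forall_nonneg
      (fun _ hq => nonneg_of_mem_strip (squeezedAnnulus_subset_strip hq))
      zero_mem_squeezedAnnulus rfl
  refine ⟨squeezedAnnulus, isCompact_squeezedAnnulus, isConnected_squeezedAnnulus,
    nonempty_chartedSpace_squeezedAnnulus, ⟨0, hO⟩, 0, hO, fun E ⟨hE, hE0⟩ => ?_⟩
  exact relMetricVia_zero_eq_top (interior_subset.trans squeezedAnnulus_subset_strip)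
    (pos_of_mem_strip (squeezedAnnulus_subset_strip hE) hE0)
end
end

section
/- Let A, D be points in ℝ² with |A| = |D| = 1 and angle AOD = π/6 at the origin O. For j ∈ ℕ let R_j = {x ∈ 4ΔAOD : |x| ∈ [4·2^{−j}, 8·2^{−j}]} be the annular layers of the dilated triangle. Then for any continuous curve γ : [0,1] → 4ΔAOD with γ(0)=A, γ(1)=D and γ(]0,1[) ⊆ Int(4ΔAOD), there exists j₀ ∈ ℕ such that the set Φ_{j₀} of angular coordinates of points of γ lying in R_{j₀} has 1-dimensional Hausdorff measure at least 2^{−j₀}·π/6. -/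
open Set Filter Topology Manifold ENNReal EuclideanGeometry

noncomputable section

/-! The angle `∠ A O γ(t)` varies continuously from `0` to `π/6` along `γ`, because `γ` avoids
the vertex `O`: its interior points lie in the interior of the triangle, and `O` does not, the
triangle lying in a half-plane through `O`. Every point of `γ` sits in some layer `R_j` with
`j ≥ 1`, so the angle sets `Φ_j`, `j ≥ 1`, cover `[0, π/6]`. Since `∑_{j ≥ 1} 2^{-j}·π/6 = π/6`,
subadditivity of `H¹` prevents every `Φ_j` from having measure below `2^{-j}·π/6`. -/

open MeasureTheory

section InnerProductSpace

variable {E : Type*} [NormedAddCommGroup E] [InnerProductSpace ℝ E]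

theorem zero_notMem_interior_of_forall_inner_nonneg {v : E} (hv : v ≠ 0) {S : Set E}
    (hS : ∀ x ∈ S, 0 ≤ inner ℝ v x) : (0 : E) ∉ interior S := by
  intro h0
  have hpath : Tendsto (fun t : ℝ => -t • v) (𝓝[>] 0) (𝓝 0) := by
    have : Continuous (fun t : ℝ => -t • v) := by fun_prop
    simpa using this.continuousWithinAt.tendsto (x := 0) (s := Ioi 0)
  obtain ⟨t, htS, ht⟩ :=
    ((hpath.eventually (mem_interior_iff_mem_nhds.1 h0)).and self_mem_nhdsWithin).exists
  have := hS _ htS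
  rw [real_inner_smul_right, real_inner_self_eq_norm_sq] at this
  nlinarith [mul_pos (mem_Ioi.1 ht) (pow_pos (norm_pos_iff.2 hv) 2)]

theorem zero_notMem_interior_convexHull_of_norm_eq {a b : E} (hab : ‖a‖ = ‖b‖)
    (hne : a + b ≠ 0) : (0 : E) ∉ interior (convexHull ℝ {0, a, b}) := by
  have hhalf : Convex ℝ {x : E | 0 ≤ inner ℝ (a + b) x} :=
    convex_halfSpace_ge (innerₛₗ ℝ (a + b)).isLinear 0
  refine zero_notMem_interior_of_forall_inner_nonneg hne fun x hx =>
    hhalf.convexHull_subset_iff.2 ?_ hx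
  have hba : -(‖a‖ * ‖b‖) ≤ inner ℝ a b := neg_le_of_abs_le (abs_real_inner_le_norm a b)
  refine insert_subset_iff.2 ⟨?_, insert_subset_iff.2 ⟨?_, singleton_subset_iff.2 ?_⟩⟩ <;>
    simp only [mem_ofPred_eq, inner_zero_right, inner_add_left, real_inner_self_eq_norm_sq,
      real_inner_comm a b, hab] at hba ⊢
  all_goals nlinarith

theorem ContinuousOn.angle {α : Type*} [TopologicalSpace α] {f g : α → E} {s : Set α}
    (hf : ContinuousOn f s) (hg : ContinuousOn g s) (hf0 : ∀ x ∈ s, f x ≠ 0)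
    (hg0 : ∀ x ∈ s, g x ≠ 0) :
    ContinuousOn (fun x => InnerProductGeometry.angle (f x) (g x)) s := fun x hx =>
  (InnerProductGeometry.continuousAt_angle (x := (f x, g x)) (hf0 x hx)
    (hg0 x hx)).comp_continuousWithinAt (f := fun y => (f y, g y)) ((hf x hx).prodMk (hg x hx))

end InnerProductSpace

theorem exists_mul_half_pow_succ_le_le {r c : ℝ} (hr : 0 < r) (hrc : r ≤ c) :
    ∃ n : ℕ, c * (1 / 2) ^ (n + 1) ≤ r ∧ r ≤ c * (1 / 2) ^ n := by
  obtain ⟨n, hn, hn'⟩ := exists_nat_pow_near ((one_le_div hr).2 hrc) one_lt_two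
  refine ⟨n, ?_, ?_⟩
  · rw [div_lt_iff₀ hr] at hn'
    rw [one_div_pow, ← div_eq_mul_one_div, div_le_iff₀ (by positivity)]
    linarith
  · rw [le_div_iff₀ hr] at hn
    rw [one_div_pow, ← div_eq_mul_one_div, le_div_iff₀ (by positivity)]
    linarith

theorem ENNReal.exists_le_of_tsum_le {α : Type*} [Nonempty α] {f g : α → ℝ≥0∞}
    (hf : ∑' a, f a ≠ ∞) (h : ∑' a, f a ≤ ∑' a, g a) : ∃ a, f a ≤ g a := by
  by_contra! hlt
  obtain ⟨a⟩ := ‹Nonempty α›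
  exact (ENNReal.tsum_lt_tsum (ne_top_of_le_ne_top hf (ENNReal.tsum_le_tsum fun a => (hlt a).le))
    (fun a => (hlt a).le) (hlt a)).not_ge h

theorem tsum_ofReal_half_pow_succ_mul {L : ℝ} (hL : 0 ≤ L) :
    ∑' n : ℕ, ENNReal.ofReal ((1 / 2) ^ (n + 1) * L) = ENNReal.ofReal L := by
  have hterm : ∀ n : ℕ, (1 / 2 : ℝ) ^ (n + 1) * L = L / 2 / 2 ^ n := fun n => by
    rw [one_div_pow, pow_succ]; field_simp
  simp_rw [hterm]
  rw [← ENNReal.ofReal_tsum_of_nonneg (fun n => by positivity) (summable_geometric_two' L),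
    tsum_geometric_two']

theorem exists_ofReal_half_pow_succ_mul_le_hausdorffMeasure {L : ℝ} (hL : 0 ≤ L)
    {S : ℕ → Set ℝ} (hS : Icc 0 L ⊆ ⋃ n, S n) :
    ∃ n, ENNReal.ofReal ((1 / 2) ^ (n + 1) * L) ≤ μH[1] (S n) := by
  refine ENNReal.exists_le_of_tsum_le
    (by rw [tsum_ofReal_half_pow_succ_mul hL]; exact ENNReal.ofReal_ne_top) ?_
  calc ∑' n : ℕ, ENNReal.ofReal ((1 / 2) ^ (n + 1) * L)
    _ = μH[1] (Icc 0 L) := by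
      rw [tsum_ofReal_half_pow_succ_mul hL, hausdorffMeasure_real, Real.volume_Icc, sub_zero]
    _ ≤ μH[1] (⋃ n, S n) := measure_mono hS
    _ ≤ ∑' n, μH[1] (S n) := measure_iUnion_le S

theorem apply_ne_of_notMem_interior {X : Type*} [TopologicalSpace X] {T : Set X} {x : X}
    (hx : x ∉ interior T) {γ : ℝ → X} (hγ0 : γ 0 ≠ x) (hγ1 : γ 1 ≠ x)
    (hγ : ∀ t ∈ Ioo (0 : ℝ) 1, γ t ∈ interior T) : ∀ t ∈ Icc (0 : ℝ) 1, γ t ≠ x := by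
  rintro t ⟨ht0, ht1⟩ hγt
  rcases ht0.eq_or_lt with rfl | ht0
  · exact hγ0 hγt
  rcases ht1.eq_or_lt with rfl | ht1
  · exact hγ1 hγt
  exact hx (hγt ▸ hγ t ⟨ht0, ht1⟩)

/-- The layer/angular-measure estimate from the proof of Theorem 2.2: for a curve `γ`
from `A` to `D` inside the dilated triangle `4ΔAOD` (interior points in its interior),
there is a layer `R_{j₀} = {x ∈ 4ΔAOD : |x| ∈ [4·2^{-j₀}, 8·2^{-j₀}]}` in which the set of
angular coordinates of points of `γ` has Hausdorff 1-measure at least `2^{-j₀}·π/6`. -/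
theorem statement13 (A D : EuclideanSpace ℝ (Fin 2))
    (hA : ‖A‖ = 1) (hD : ‖D‖ = 1)
    (hAD : ∠ A (0 : EuclideanSpace ℝ (Fin 2)) D = Real.pi / 6)
    (T4 : Set (EuclideanSpace ℝ (Fin 2)))
    (hT4 : T4 = convexHull ℝ {0, (4:ℝ) • A, (4:ℝ) • D})
    (R : ℕ → Set (EuclideanSpace ℝ (Fin 2)))
    (hR : ∀ j, R j = {x ∈ T4 | ‖x‖ ∈ Set.Icc (4 * (1/2:ℝ)^j) (8 * (1/2:ℝ)^j)})
    (γ : ℝ → EuclideanSpace ℝ (Fin 2))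
    (hγc : ContinuousOn γ (Set.Icc 0 1)) (hγ0 : γ 0 = A) (hγ1 : γ 1 = D)
    (hγT : ∀ t ∈ Set.Icc (0:ℝ) 1, γ t ∈ T4)
    (hγint : ∀ t ∈ Set.Ioo (0:ℝ) 1, γ t ∈ interior T4)
    (Φ : ℕ → Set ℝ)
    (hΦ : ∀ j, Φ j = {θ : ℝ | ∃ t ∈ Set.Icc (0:ℝ) 1, γ t ∈ R j ∧
      θ = ∠ A (0 : EuclideanSpace ℝ (Fin 2)) (γ t)}) :
    ∃ j₀ : ℕ, ENNReal.ofReal ((1/2:ℝ)^j₀ * (Real.pi / 6)) ≤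
      MeasureTheory.Measure.hausdorffMeasure 1 (Φ j₀) := by
  have hA0 : A ≠ 0 := by rintro rfl; simp at hA
  have hD0 : D ≠ 0 := by rintro rfl; simp at hD
  have hangle : ∀ x, ∠ A 0 x = InnerProductGeometry.angle A x := fun x => by
    simp [EuclideanGeometry.angle]
  have hAD0 : A + D ≠ 0 := fun h => by
    rw [← neg_eq_of_add_eq_zero_right h, hangle, InnerProductGeometry.angle_neg_right,
      InnerProductGeometry.angle_self hA0] at hAD
    linarith [Real.pi_pos]
  have hγ0' : ∀ t ∈ Icc (0 : ℝ) 1, γ t ≠ 0 := by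
    refine apply_ne_of_notMem_interior ?_ (hγ0 ▸ hA0) (hγ1 ▸ hD0) hγint
    rw [hT4]
    exact zero_notMem_interior_convexHull_of_norm_eq (by simp [norm_smul, hA, hD])
      (by rw [← smul_add]; exact smul_ne_zero four_ne_zero hAD0)
  have hγ4 : ∀ t ∈ Icc (0 : ℝ) 1, ‖γ t‖ ≤ 4 := fun t ht => by
    have hT4_ball : T4 ⊆ Metric.closedBall 0 4 :=
      hT4 ▸ (convex_closedBall _ _).convexHull_subset_iff.2
        (by simp [insert_subset_iff, norm_smul, hA, hD])
    simpa using hT4_ball (hγT t ht)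
  have hcover : Icc 0 (Real.pi / 6) ⊆ ⋃ n : ℕ, Φ (n + 1) := by
    intro θ hθ
    have hIVT := intermediate_value_Icc zero_le_one
      (continuousOn_const.angle hγc (fun _ _ => hA0) hγ0')
    rw [hγ0, hγ1, InnerProductGeometry.angle_self hA0, ← hangle, hAD] at hIVT
    obtain ⟨t, ht, rfl⟩ := hIVT hθ
    obtain ⟨n, hn, hn'⟩ :=
      exists_mul_half_pow_succ_le_le (norm_pos_iff.2 (hγ0' t ht)) (hγ4 t ht)
    refine mem_iUnion.2 ⟨n, ?_⟩
    rw [hΦ, hR]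
    exact ⟨t, ht, ⟨hγT t ht, hn, by linarith [pow_succ (1 / 2 : ℝ) n]⟩, (hangle _).symm⟩
  obtain ⟨n, hn⟩ := exists_ofReal_half_pow_succ_mul_le_hausdorffMeasure (by positivity) hcover
  exact ⟨n + 1, hn⟩
end
end

section
/- Let K be the solid cone in ℝ³ obtained by rotating the angle ∠AOD = π/6 around the ray OA, and K_{4ΔAOD} the truncated cone obtained by rotating the triangle 4ΔAOD. Any continuous curve γ in K \ {O} joining A and D that is not contained in K_{4ΔAOD} \ {O} has rotational projection meeting the segment [4A, 4D], and hence length at least 2(4 sin(π/3) − 1) = 2(2√3 − 1) > 4. -/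
open Set Filter Topology Manifold ENNReal EuclideanGeometry

noncomputable section

open scoped RealInnerProductSpace

/-!
Write `r x = ‖x - ⟪x, A⟫ • A‖` for the distance to the axis `OA`. Since `w = 2D - √3 A`, the
rotated point `Proj_rot x` has coordinates `(⟪x, A⟫ - √3 r x, 2 r x)` in the frame `A, D`; both
are nonnegative on the cone `K`, and their sum `⟪x, A⟫ + (2 - √3) r x` is `1` at `A` and exceeds
`4` where `γ` leaves `K_{4ΔAOD}`. By the intermediate value theorem it equals `4` at some point
`γ c`, whose projection then lies on `[4A, 4D]`. Points of that segment have norm at least `2√3`,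
and the rotation preserves norms, so `γ` runs from the unit sphere out to radius `2√3` and back.
-/

theorem edist_add_edist_le_eVariationOn {α E : Type*} [LinearOrder α] [PseudoEMetricSpace E]
    (f : α → E) {a b c : α} (hac : a ≤ c) (hcb : c ≤ b) :
    edist (f a) (f c) + edist (f c) (f b) ≤ eVariationOn f (Icc a b) := by
  have hsplit := eVariationOn.Icc_add_Icc f hac hcb (mem_univ c)
  simp only [univ_inter] at hsplit
  rw [← hsplit]
  exact add_le_add (eVariationOn.edist_le f (left_mem_Icc.2 hac) (right_mem_Icc.2 hac))
    (eVariationOn.edist_le f (left_mem_Icc.2 hcb) (right_mem_Icc.2 hcb))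

theorem ofReal_two_mul_sub_one_le_eVariationOn {α E : Type*} [LinearOrder α]
    [SeminormedAddCommGroup E] (f : α → E) {a b c : α} {R : ℝ} (hac : a ≤ c) (hcb : c ≤ b)
    (ha : ‖f a‖ = 1) (hb : ‖f b‖ = 1) (hc : R ≤ ‖f c‖) :
    ENNReal.ofReal (2 * (R - 1)) ≤ eVariationOn f (Icc a b) := by
  have hac' : ‖f c‖ - ‖f a‖ ≤ dist (f a) (f c) := by
    rw [dist_comm, dist_eq_norm]; exact norm_sub_norm_le _ _
  have hcb' : ‖f c‖ - ‖f b‖ ≤ dist (f c) (f b) := by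
    rw [dist_eq_norm]; exact norm_sub_norm_le _ _
  calc ENNReal.ofReal (2 * (R - 1))
      ≤ ENNReal.ofReal (dist (f a) (f c) + dist (f c) (f b)) :=
        ENNReal.ofReal_le_ofReal (by linarith)
    _ = edist (f a) (f c) + edist (f c) (f b) := by
        rw [ENNReal.ofReal_add dist_nonneg dist_nonneg, edist_dist, edist_dist]
    _ ≤ eVariationOn f (Icc a b) := edist_add_edist_le_eVariationOn f hac hcb

theorem smul_add_smul_mem_convexHull_zero_pair {E : Type*} [AddCommGroup E] [Module ℝ E]
    (u v : E) {a b : ℝ} (ha : 0 ≤ a) (hb : 0 ≤ b) (hab : a + b ≤ 1) :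
    a • u + b • v ∈ convexHull ℝ {0, u, v} := by
  have h := (convex_convexHull ℝ ({0, u, v} : Set E)).sum_mem (t := Finset.univ)
    (w := ![1 - a - b, a, b]) (z := ![0, u, v])
    (by intro i _; fin_cases i <;> simp [ha, hb]; linarith)
    (by simp [Fin.sum_univ_three]; ring)
    (by intro i _; apply subset_convexHull; fin_cases i <;> simp)
  simpa [Fin.sum_univ_three] using h

section Projection

variable {E : Type*} [NormedAddCommGroup E] [InnerProductSpace ℝ E] {A w : E}

theorem norm_sq_eq_inner_sq_add_norm_sub_sq (hA : ‖A‖ = 1) (x : E) :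
    ‖x‖ ^ 2 = ⟪x, A⟫ ^ 2 + ‖x - ⟪x, A⟫ • A‖ ^ 2 := by
  have horth : ⟪⟪x, A⟫ • A, x - ⟪x, A⟫ • A⟫ = 0 := by
    rw [inner_sub_right, real_inner_smul_left, real_inner_smul_left, real_inner_smul_right,
      real_inner_self_eq_norm_sq, hA, real_inner_comm]
    ring
  have h := norm_add_sq_eq_norm_sq_add_norm_sq_real horth
  rw [add_sub_cancel, norm_smul, hA, mul_one, Real.norm_eq_abs, abs_mul_abs_self] at h
  rw [sq, sq, sq, h]

/-- `Proj_rot`: the rotation about the axis `ℝ A` into the half-plane `ℝ A + ℝ≥0 w`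
(for a unit vector `w ⊥ A`). -/
def rotProj (A w x : E) : E := ⟪x, A⟫ • A + ‖x - ⟪x, A⟫ • A‖ • w

theorem norm_rotProj (hA : ‖A‖ = 1) (hw : ‖w‖ = 1) (hAw : ⟪A, w⟫ = 0) (x : E) :
    ‖rotProj A w x‖ = ‖x‖ := by
  have horth : ⟪⟪x, A⟫ • A, ‖x - ⟪x, A⟫ • A‖ • w⟫ = 0 := by
    rw [real_inner_smul_left, real_inner_smul_right, hAw, mul_zero, mul_zero]
  have h := norm_add_sq_eq_norm_sq_add_norm_sq_real horth
  rw [norm_smul, norm_smul, hA, hw, mul_one, mul_one, Real.norm_eq_abs, norm_norm,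
    abs_mul_abs_self, ← sq, ← sq, ← sq, ← norm_sq_eq_inner_sq_add_norm_sub_sq hA] at h
  exact (pow_left_inj₀ (norm_nonneg _) (norm_nonneg _) two_ne_zero).1 h

theorem sqrt_three_mul_norm_sub_le_inner (hA : ‖A‖ = 1) {x : E}
    (hx : InnerProductGeometry.angle A x ≤ Real.pi / 6) :
    √3 * ‖x - ⟪x, A⟫ • A‖ ≤ ⟪x, A⟫ := by
  have hcos : √3 / 2 * ‖x‖ ≤ ⟪x, A⟫ := by
    have h := Real.cos_le_cos_of_nonneg_of_le_pi (InnerProductGeometry.angle_nonneg A x)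
      (by linarith [Real.pi_pos]) hx
    rw [Real.cos_pi_div_six] at h
    rw [real_inner_comm, ← InnerProductGeometry.cos_angle_mul_norm_mul_norm, hA, one_mul]
    exact mul_le_mul_of_nonneg_right h (norm_nonneg x)
  have hpyth := norm_sq_eq_inner_sq_add_norm_sub_sq hA x
  have h3 : √3 ^ 2 = 3 := Real.sq_sqrt (by norm_num)
  have hinner : 0 ≤ ⟪x, A⟫ := le_trans (by positivity) hcos
  have hsq : (√3 * ‖x - ⟪x, A⟫ • A‖) ^ 2 ≤ ⟪x, A⟫ ^ 2 := by
    nlinarith [mul_le_mul hcos hcos (by positivity) hinner]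
  exact (pow_le_pow_iff_left₀ (by positivity) hinner two_ne_zero).1 hsq

end Projection

section PiDivSix

variable {E : Type*} [NormedAddCommGroup E] [InnerProductSpace ℝ E] {A D w : E}

theorem eq_neg_sqrt_three_smul_add_two_smul (hA : ‖A‖ = 1) (hD : ‖D‖ = 1)
    (hAD : ⟪A, D⟫ = √3 / 2) (hw : ‖w‖ = 1) (hAw : ⟪A, w⟫ = 0)
    (hw_mem : w ∈ Submodule.span ℝ {A, D}) (hDw : 0 < ⟪D, w⟫) :
    w = -√3 • A + (2 : ℝ) • D := by
  obtain ⟨p, q, rfl⟩ := Submodule.mem_span_pair.1 hw_mem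
  have hAA : ⟪A, A⟫ = 1 := by rw [real_inner_self_eq_norm_sq, hA, one_pow]
  have hDD : ⟪D, D⟫ = 1 := by rw [real_inner_self_eq_norm_sq, hD, one_pow]
  have hDA : ⟪D, A⟫ = √3 / 2 := by rw [real_inner_comm, hAD]
  have h3 : √3 ^ 2 = 3 := Real.sq_sqrt (by norm_num)
  simp only [inner_add_right, real_inner_smul_right, hAA, hDD, hAD, hDA] at hAw hDw
  have hww : ⟪p • A + q • D, p • A + q • D⟫ = 1 := by
    rw [real_inner_self_eq_norm_sq, hw, one_pow]
  simp only [inner_add_right, inner_add_left, real_inner_smul_left, real_inner_smul_right,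
    hAA, hDD, hAD, hDA] at hww
  have hp : p = -(√3 / 2 * q) := by linarith
  subst hp
  have hq : q = 2 := by nlinarith
  subst hq
  congr 2
  ring

def triangleLevel (A x : E) : ℝ := ⟪x, A⟫ + (2 - √3) * ‖x - ⟪x, A⟫ • A‖

theorem continuous_triangleLevel (A : E) : Continuous (triangleLevel A) := by
  unfold triangleLevel; fun_prop

theorem triangleLevel_self (hA : ‖A‖ = 1) : triangleLevel A A = 1 := by
  rw [triangleLevel, real_inner_self_eq_norm_sq, hA]; simp

theorem rotProj_eq_smul_add_smul (hw : w = -√3 • A + (2 : ℝ) • D) (x : E) :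
    rotProj A w x = ((⟪x, A⟫ - √3 * ‖x - ⟪x, A⟫ • A‖) / 4) • ((4 : ℝ) • A)
      + (‖x - ⟪x, A⟫ • A‖ / 2) • ((4 : ℝ) • D) := by
  rw [rotProj, hw]; module

theorem rotProj_mem_convexHull_of_triangleLevel_le (hw : w = -√3 • A + (2 : ℝ) • D) {x : E}
    (hx : √3 * ‖x - ⟪x, A⟫ • A‖ ≤ ⟪x, A⟫) (hlevel : triangleLevel A x ≤ 4) :
    rotProj A w x ∈ convexHull ℝ {0, (4 : ℝ) • A, (4 : ℝ) • D} := by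
  rw [rotProj_eq_smul_add_smul hw]
  refine smul_add_smul_mem_convexHull_zero_pair _ _ (by linarith) (by positivity) ?_
  rw [triangleLevel] at hlevel
  linarith

theorem rotProj_mem_segment_of_triangleLevel_eq (hw : w = -√3 • A + (2 : ℝ) • D) {x : E}
    (hx : √3 * ‖x - ⟪x, A⟫ • A‖ ≤ ⟪x, A⟫) (hlevel : triangleLevel A x = 4) :
    rotProj A w x ∈ segment ℝ ((4 : ℝ) • A) ((4 : ℝ) • D) := by
  rw [rotProj_eq_smul_add_smul hw]
  refine ⟨_, _, by linarith, by positivity, ?_, rfl⟩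
  rw [triangleLevel] at hlevel
  linarith

theorem two_mul_sqrt_three_le_norm_of_mem_segment (hA : ‖A‖ = 1) (hD : ‖D‖ = 1)
    (hAD : ⟪A, D⟫ = √3 / 2) {y : E} (hy : y ∈ segment ℝ ((4 : ℝ) • A) ((4 : ℝ) • D)) :
    2 * √3 ≤ ‖y‖ := by
  obtain ⟨s, t, hs, ht, hst, rfl⟩ := hy
  have h3 : √3 ^ 2 = 3 := Real.sq_sqrt (by norm_num)
  have h3' : 1 ≤ √3 := by nlinarith [Real.sqrt_nonneg 3]
  have hAA : ⟪A, A⟫ = 1 := by rw [real_inner_self_eq_norm_sq, hA, one_pow]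
  have hDD : ⟪D, D⟫ = 1 := by rw [real_inner_self_eq_norm_sq, hD, one_pow]
  have hnorm : ‖s • (4 : ℝ) • A + t • (4 : ℝ) • D‖ ^ 2 = 16 * (s ^ 2 + t ^ 2 + √3 * s * t) := by
    rw [← real_inner_self_eq_norm_sq]
    simp only [inner_add_right, inner_add_left, real_inner_smul_left, real_inner_smul_right,
      hAA, hDD, hAD, real_inner_comm A D]
    ring
  apply le_of_sq_le_sq _ (norm_nonneg _)
  rw [hnorm, mul_pow, h3]
  nlinarith [mul_nonneg (mul_nonneg hs ht) (sub_nonneg.2 h3'), sq_nonneg (s - t)]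

end PiDivSix

/-- The escape estimate from the proof of Theorem 2.2: let `K` be the solid cone obtained
by rotating the angle `∠AOD = π/6` about the ray `OA` and `K_{4ΔAOD}` the truncated cone
over the dilated triangle `4ΔAOD`. Any curve in `K \ {O}` from `A` to `D` not contained in
`K_{4ΔAOD} \ {O}` has rotational projection meeting the segment `[4A, 4D]`, and hence has
length at least `2(4·sin(π/3) − 1) = 2(2√3 − 1) > 4`. Here the rotational projection sends
`x` to the point of the half-plane spanned by `A` and the unit vector `w` (coplanar with
`A, D`, orthogonal to `A`, on the side of `D`) with the same axial component and the same
distance to the axis `OA`. -/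
theorem statement15 (A D w : EuclideanSpace ℝ (Fin 3))
    (hA : ‖A‖ = 1) (hD : ‖D‖ = 1)
    (hAD : ∠ A (0 : EuclideanSpace ℝ (Fin 3)) D = Real.pi / 6)
    (hw1 : ‖w‖ = 1) (hw2 : ⟪A, w⟫ = 0)
    (hw3 : w ∈ Submodule.span ℝ ({A, D} : Set (EuclideanSpace ℝ (Fin 3))))
    (hw4 : 0 < ⟪D, w⟫)
    (projRot : EuclideanSpace ℝ (Fin 3) → EuclideanSpace ℝ (Fin 3))
    (hproj : projRot = fun x => ⟪x, A⟫ • A + ‖x - ⟪x, A⟫ • A‖ • w)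
    (K T4 K4 : Set (EuclideanSpace ℝ (Fin 3)))
    (hK : K = insert 0 {x | ∠ A (0 : EuclideanSpace ℝ (Fin 3)) x ≤ Real.pi / 6})
    (hT4 : T4 = convexHull ℝ {0, (4:ℝ) • A, (4:ℝ) • D})
    (hK4 : K4 = {x ∈ K | projRot x ∈ T4})
    (γ : ℝ → EuclideanSpace ℝ (Fin 3))
    (hγc : ContinuousOn γ (Set.Icc 0 1)) (hγ0 : γ 0 = A) (hγ1 : γ 1 = D)
    (hγK : ∀ t ∈ Set.Icc (0:ℝ) 1, γ t ∈ K ∧ γ t ≠ 0)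
    (hout : ∃ t ∈ Set.Icc (0:ℝ) 1, γ t ∉ K4) :
    (∃ t ∈ Set.Icc (0:ℝ) 1, projRot (γ t) ∈ segment ℝ ((4:ℝ) • A) ((4:ℝ) • D)) ∧
    ENNReal.ofReal (2 * (2 * Real.sqrt 3 - 1)) ≤ eVariationOn γ (Set.Icc 0 1) := by
  subst hproj hK hT4 hK4
  have hADin : ⟪A, D⟫ = √3 / 2 := by
    have h := InnerProductGeometry.cos_angle_mul_norm_mul_norm A D
    simp only [EuclideanGeometry.angle, vsub_eq_sub, sub_zero] at hAD
    rw [hAD, Real.cos_pi_div_six, hA, hD, mul_one, mul_one] at h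
    exact h.symm
  have hw := eq_neg_sqrt_three_smul_add_two_smul hA hD hADin hw1 hw2 hw3 hw4
  have hcone : ∀ t ∈ Icc (0 : ℝ) 1, √3 * ‖γ t - ⟪γ t, A⟫ • A‖ ≤ ⟪γ t, A⟫ := by
    intro t ht
    obtain ⟨h0 | hK, hne⟩ := hγK t ht
    · exact absurd h0 hne
    · simp only [EuclideanGeometry.angle, vsub_eq_sub, sub_zero] at hK
      exact sqrt_three_mul_norm_sub_le_inner hA hK
  obtain ⟨t₁, ht₁, hγt₁⟩ := hout
  have hlevel : 4 < triangleLevel A (γ t₁) := by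
    by_contra! h
    exact hγt₁ ⟨(hγK t₁ ht₁).1, rotProj_mem_convexHull_of_triangleLevel_le hw (hcone t₁ ht₁) h⟩
  obtain ⟨c, hc, hc4⟩ : ∃ c ∈ Icc 0 t₁, triangleLevel A (γ c) = 4 :=
    intermediate_value_Icc ht₁.1
      ((continuous_triangleLevel A).comp_continuousOn (hγc.mono (Icc_subset_Icc le_rfl ht₁.2)))
      ⟨by simp only [Function.comp_apply, hγ0, triangleLevel_self hA]; norm_num, hlevel.le⟩
  have hc1 : c ∈ Icc (0 : ℝ) 1 := ⟨hc.1, hc.2.trans ht₁.2⟩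
  have hseg := rotProj_mem_segment_of_triangleLevel_eq hw (hcone c hc1) hc4
  have hfar : 2 * √3 ≤ ‖γ c‖ := by
    rw [← norm_rotProj hA hw1 hw2]
    exact two_mul_sqrt_three_le_norm_of_mem_segment hA hD hADin hseg
  exact ⟨⟨c, hc1, hseg⟩, ofReal_two_mul_sub_one_le_eVariationOn γ hc1.1 hc1.2
    (by rw [hγ0, hA]) (by rw [hγ1, hD]) hfar⟩
end
end
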